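/- Let Z and X be real random variables on a probability space (Ω, μ), let ρ be the law of the pair (Z, X), and let F_{X|z} denote the conditional cumulative distribution function of X given Z = z. Suppose that for ρ-almost every z, the function x ↦ F_{X|z}(x) is continuous. Let F̃ be any cumulative distribution function on ℝ with generalized inverse F̃⁻¹(p) = inf{x ∈ ℝ : F̃(x) ≥ p}. Then the random variable X̃(ω) = F̃⁻¹(F_{X|Z(ω)}(X(ω))) is independent of Z and has cumulative distribution function F̃; that is, the map g = F̃⁻¹ ∘ F_{X|z} optimally transports X given Z = z to a variable independent of Z. -/

import Mathlib

/-!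
Disintegrate the joint law as `ρ = ρ_Z ⊗ (z ↦ dF_{X|z})`. Given `Z = z`, the variable
`U = F_{X|Z}(X)` is the probability integral transform of the continuous cdf `F_{X|z}`, hence
uniform on `[0, 1]` whatever `z` is; so `(Z, U)` has law `ρ_Z ⊗ Unif[0, 1]`, i.e. `U` is uniform
and independent of `Z`. Then `F̃⁻¹(U)` is a measurable function of `U`, hence still independent
of `Z`, and since `F̃⁻¹(p) ≤ x ↔ p ≤ F̃(x)` for `p ∈ (0, 1)`, inverse transform sampling shows
that it has law `ν`.
-/

open MeasureTheory ProbabilityTheory Set Filter Topology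

/-- Generalized inverse (quantile function) of a cumulative distribution function:
`G⁻¹(p) = inf {x : ℝ | G x ≥ p}`. -/
noncomputable def quantileFn (G : ℝ → ℝ) (p : ℝ) : ℝ :=
  sInf {x : ℝ | p ≤ G x}

theorem volume_restrict_Icc_zero_one_Iic (c : ℝ) :
    volume.restrict (Icc (0 : ℝ) 1) (Iic c) = ENNReal.ofReal (min c 1) := by
  have : Iic c ∩ Icc 0 1 = Icc 0 (min c 1) := by
    ext x; simp only [mem_inter_iff, mem_Iic, mem_Icc, le_min_iff]; tauto
  rw [Measure.restrict_apply measurableSet_Iic, this, Real.volume_Icc, sub_zero]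

section Quantile

variable {ν : Measure ℝ} {p : ℝ}

theorem bddBelow_setOf_le_cdf (hp : 0 < p) : BddBelow {x | p ≤ cdf ν x} := by
  obtain ⟨y, hy⟩ := eventually_atBot.1 ((tendsto_cdf_atBot ν).eventually (eventually_lt_nhds hp))
  exact ⟨y, fun x hx => le_of_not_gt fun hxy => (hy x hxy.le).not_ge hx⟩

theorem nonempty_setOf_le_cdf [IsProbabilityMeasure ν] (hp : p < 1) :
    {x | p ≤ cdf ν x}.Nonempty :=
  ((tendsto_cdf_atTop ν).eventually (eventually_gt_nhds hp)).exists.imp fun _ => le_of_lt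

theorem quantileFn_cdf_le_iff [IsProbabilityMeasure ν] (hp0 : 0 < p) (hp1 : p < 1) {x : ℝ} :
    quantileFn (cdf ν) p ≤ x ↔ p ≤ cdf ν x := by
  refine ⟨fun h => le_trans ?_ ((cdf ν).mono h), fun h => csInf_le (bddBelow_setOf_le_cdf hp0) h⟩
  -- right-continuity of the cdf puts the infimum into the set
  refine ge_of_tendsto
    (((cdf ν).right_continuous _).mono_left (nhdsWithin_mono _ Ioi_subset_Ici_self)) ?_
  filter_upwards [self_mem_nhdsWithin] with y hy
  obtain ⟨s, hs, hsy⟩ :=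
    (csInf_lt_iff (bddBelow_setOf_le_cdf hp0) (nonempty_setOf_le_cdf hp1)).1 hy
  exact hs.trans ((cdf ν).mono hsy.le)

theorem quantileFn_cdf_of_nonpos (hp : p ≤ 0) : quantileFn (cdf ν) p = 0 := by
  rw [quantileFn, eq_univ_of_forall (s := {x | p ≤ cdf ν x}) fun x => hp.trans (cdf_nonneg ν x),
    Real.sInf_univ]

theorem quantileFn_cdf_of_one_lt (hp : 1 < p) : quantileFn (cdf ν) p = 0 := by
  rw [quantileFn, eq_empty_of_forall_notMem (s := {x | p ≤ cdf ν x})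
    fun x hx => (cdf_le_one ν x).not_gt (hp.trans_le hx), Real.sInf_empty]

theorem measurable_quantileFn_cdf [IsProbabilityMeasure ν] : Measurable (quantileFn (cdf ν)) := by
  refine measurable_of_Iic fun x => ?_
  -- off `(0, 1)` the quantile function vanishes, except possibly at `1`
  have : quantileFn (cdf ν) ⁻¹' Iic x = (Ioo 0 1 ∩ Iic (cdf ν x)) ∪
      ((Iic 0 ∪ Ioi 1) ∩ {_p | 0 ≤ x}) ∪ ({1} ∩ quantileFn (cdf ν) ⁻¹' Iic x) := by
    ext p
    rcases le_or_gt p 0 with hp0 | hp0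
    · simp [quantileFn_cdf_of_nonpos hp0, hp0, not_lt.2 hp0]
    rcases lt_trichotomy p 1 with hp1 | rfl | hp1
    · simp [quantileFn_cdf_le_iff hp0 hp1, hp0, hp1, hp1.ne, not_le.2 hp0, not_lt.2 hp1.le]
    · simp
    · simp [quantileFn_cdf_of_one_lt hp1, hp1, hp1.ne', not_le.2 hp0, not_lt.2 hp1.le]
  rw [this]
  exact ((measurableSet_Ioo.inter measurableSet_Iic).union
    ((measurableSet_Iic.union measurableSet_Ioi).inter (.const _))).union
    (subsingleton_singleton.anti inter_subset_left).measurableSet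

theorem map_quantileFn_cdf [IsProbabilityMeasure ν] :
    (volume.restrict (Icc 0 1)).map (quantileFn (cdf ν)) = ν := by
  have hq : Measurable (quantileFn (cdf ν)) := measurable_quantileFn_cdf
  refine Measure.ext_of_Iic _ _ fun x => ?_
  have hsub : quantileFn (cdf ν) ⁻¹' Iic x ∩ Ioo 0 1 = Iic (cdf ν x) ∩ Ioo 0 1 := by
    ext p
    exact and_congr_left fun hp => quantileFn_cdf_le_iff hp.1 hp.2
  rw [Measure.map_apply hq measurableSet_Iic, ← Measure.restrict_congr_set Ioo_ae_eq_Icc,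
    Measure.restrict_apply (hq measurableSet_Iic), hsub, ← Measure.restrict_apply measurableSet_Iic,
    Measure.restrict_congr_set Ioo_ae_eq_Icc, volume_restrict_Icc_zero_one_Iic,
    min_eq_left (cdf_le_one ν x), ofReal_cdf]

end Quantile

theorem exists_setOf_le_eq_Iic {f : ℝ → ℝ} (hmono : Monotone f) (hcont : Continuous f) {p : ℝ}
    (hle : ∃ x, f x ≤ p) (hlt : ∃ x, p < f x) : ∃ a, f a = p ∧ {x | f x ≤ p} = Iic a := by
  obtain ⟨u, hu⟩ := hlt
  have hbdd : BddAbove {x | f x ≤ p} :=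
    ⟨u, fun x hx => le_of_not_gt fun hux => (hu.trans_le (hmono hux.le)).not_ge hx⟩
  have ha : f (sSup {x | f x ≤ p}) ≤ p :=
    (isClosed_le hcont continuous_const).csSup_mem hle hbdd
  refine ⟨_, le_antisymm ha ?_, Subset.antisymm (fun x hx => le_csSup hbdd hx)
    fun x hx => (hmono hx).trans ha⟩
  refine ge_of_tendsto (hcont.continuousWithinAt (s := Ioi (sSup {x | f x ≤ p}))).tendsto ?_
  filter_upwards [self_mem_nhdsWithin] with y hy
  exact le_of_not_ge fun hyp => (le_csSup hbdd hyp).not_gt hy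

theorem StieltjesFunction.map_measure_self_eq_restrict_Icc {F : StieltjesFunction ℝ}
    (hF : Continuous F) (hbot : Tendsto F atBot (𝓝 0)) (htop : Tendsto F atTop (𝓝 1)) :
    F.measure.map F = volume.restrict (Icc 0 1) := by
  have := F.isProbabilityMeasure hbot htop
  refine Measure.ext_of_Iic _ _ fun p => ?_
  rw [Measure.map_apply F.mono.measurable measurableSet_Iic, volume_restrict_Icc_zero_one_Iic]
  change F.measure {x | F x ≤ p} = _
  rcases le_or_gt 1 p with h1 | h1
  · rw [eq_univ_of_forall (s := {x | F x ≤ p}) fun x => (F.mono.ge_of_tendsto htop x).trans h1,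
      MeasureTheory.measure_univ, min_eq_right h1, ENNReal.ofReal_one]
  rw [min_eq_left h1.le]
  by_cases hle : ∃ x, F x ≤ p
  · obtain ⟨a, hFa, hS⟩ :=
      exists_setOf_le_eq_Iic F.mono hF hle (htop.eventually (eventually_gt_nhds h1)).exists
    rw [hS, F.measure_Iic hbot, hFa, sub_zero]
  · push Not at hle
    rw [eq_empty_of_forall_notMem (s := {x | F x ≤ p}) fun x hx => (hle x).not_ge hx,
      measure_empty, ENNReal.ofReal_of_nonpos (ge_of_tendsto' hbot fun x => (hle x).le)]

section CondCDF

variable {α : Type*} [MeasurableSpace α]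

theorem measurable_stieltjesFunction_uncurry {f : α → StieltjesFunction ℝ}
    (hf : ∀ x, Measurable fun a => f a x) : Measurable fun q : α × ℝ => f q.1 q.2 := by
  refine measurable_of_Iio fun c => ?_
  have : (fun q : α × ℝ => f q.1 q.2) ⁻¹' Iio c = ⋃ r : ℚ, {a | f a r < c} ×ˢ Iio (r : ℝ) := by
    -- by right-continuity, `f a x < c` iff `f a r < c` for some rational `r > x`
    ext ⟨a, x⟩
    simp only [mem_preimage, mem_Iio, mem_iUnion, mem_prod, mem_ofPred_eq]
    refine ⟨fun h => ?_, fun ⟨r, hr, hxr⟩ => ((f a).mono hxr.le).trans_lt hr⟩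
    obtain ⟨y, hy, hxy⟩ := ((((f a).right_continuous x).mono_left
      (nhdsWithin_mono _ Ioi_subset_Ici_self)).eventually (gt_mem_nhds h)).and
        self_mem_nhdsWithin |>.exists
    obtain ⟨r, hxr, hry⟩ := exists_rat_btwn hxy
    exact ⟨r, ((f a).mono hry.le).trans_lt hy, hxr⟩
  rw [this]
  exact .iUnion fun r => (hf r measurableSet_Iio).prod measurableSet_Iio

noncomputable def condCDFKernel (ρ : Measure (α × ℝ)) : Kernel α ℝ :=
  ⟨fun a => (condCDF ρ a).measure, measurable_measure_condCDF ρ⟩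

instance (ρ : Measure (α × ℝ)) : IsMarkovKernel (condCDFKernel ρ) :=
  ⟨fun a => instIsProbabilityMeasureCondCDF ρ a⟩

theorem compProd_fst_condCDFKernel (ρ : Measure (α × ℝ)) [IsFiniteMeasure ρ] :
    ρ.fst ⊗ₘ condCDFKernel ρ = ρ :=
  congrArg (fun κ => κ ()) (compProd_toKernel (isCondKernelCDF_condCDF ρ))

theorem map_prodMk_condCDF (ρ : Measure (α × ℝ)) [IsFiniteMeasure ρ]
    (hcont : ∀ᵐ a ∂ρ.fst, Continuous (condCDF ρ a)) :
    ρ.map (fun q => (q.1, condCDF ρ q.1 q.2)) = ρ.fst.prod (volume.restrict (Icc 0 1)) := by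
  have hW : Measurable fun q : α × ℝ => (q.1, condCDF ρ q.1 q.2) :=
    measurable_fst.prodMk (measurable_stieltjesFunction_uncurry (measurable_condCDF ρ))
  refine (Measure.prod_eq fun s t hs ht => ?_).symm
  have hslice : ∀ a, condCDFKernel ρ a
      (Prod.mk a ⁻¹' ((fun q => (q.1, condCDF ρ q.1 q.2)) ⁻¹' s ×ˢ t)) =
        s.indicator (fun a => (condCDF ρ a).measure (condCDF ρ a ⁻¹' t)) a := by
    intro a
    by_cases ha : a ∈ s <;> simp [ha, condCDFKernel, preimage]
  calc ρ.map (fun q => (q.1, condCDF ρ q.1 q.2)) (s ×ˢ t)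
      = (ρ.fst ⊗ₘ condCDFKernel ρ) ((fun q => (q.1, condCDF ρ q.1 q.2)) ⁻¹' s ×ˢ t) := by
        rw [Measure.map_apply hW (hs.prod ht), compProd_fst_condCDFKernel]
    _ = ∫⁻ a in s, (condCDF ρ a).measure.map (condCDF ρ a) t ∂ρ.fst := by
        simp_rw [Measure.compProd_apply (hW (hs.prod ht)), hslice, lintegral_indicator hs,
          Measure.map_apply (condCDF ρ _).mono.measurable ht]
    _ = ∫⁻ _ in s, volume.restrict (Icc 0 1) t ∂ρ.fst := by
        refine lintegral_congr_ae (ae_restrict_of_ae (hcont.mono fun a ha => ?_))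
        dsimp only
        rw [(condCDF ρ a).map_measure_self_eq_restrict_Icc ha (tendsto_condCDF_atBot ρ a)
          (tendsto_condCDF_atTop ρ a)]
    _ = ρ.fst s * volume.restrict (Icc 0 1) t := by
        rw [setLIntegral_const, mul_comm]

end CondCDF

/-- **Optimal transport of `X` given `Z = z` to a variable independent of `Z`.**
Let `ρ` be the joint law of `(Z, X)` and `F_{X|z} = condCDF ρ z` the conditional cdf of `X`
given `Z = z`, continuous for `ρ`-a.e. `z`, and let `F̃` be the cdf of any probability
distribution `ν` on `ℝ`. Then `X̃(ω) = F̃⁻¹(F_{X|Z(ω)}(X(ω)))` is independent of `Z` and has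
cumulative distribution function `F̃`. -/
theorem quantile_comp_condCDF_indep_and_cdf
    {Ω : Type*} [MeasurableSpace Ω] (μ : Measure Ω) [IsProbabilityMeasure μ]
    (Z X : Ω → ℝ) (hZ : Measurable Z) (hX : Measurable X)
    (ρ : Measure (ℝ × ℝ)) (hρ : ρ = μ.map fun ω => (Z ω, X ω))
    (hcont : ∀ᵐ z ∂ρ.fst, Continuous (condCDF ρ z))
    (ν : Measure ℝ) [IsProbabilityMeasure ν] :
    IndepFun (fun ω => quantileFn (cdf ν) (condCDF ρ (Z ω) (X ω))) Z μ ∧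
      ∀ x : ℝ,
        cdf (μ.map fun ω => quantileFn (cdf ν) (condCDF ρ (Z ω) (X ω))) x = cdf ν x := by
  have hV : Measurable fun ω => (Z ω, X ω) := hZ.prodMk hX
  have : IsProbabilityMeasure ρ := hρ ▸ Measure.isProbabilityMeasure_map hV.aemeasurable
  have : IsProbabilityMeasure (μ.map Z) := Measure.isProbabilityMeasure_map hZ.aemeasurable
  have hF : Measurable fun q : ℝ × ℝ => condCDF ρ q.1 q.2 :=
    measurable_stieltjesFunction_uncurry (measurable_condCDF ρ)
  set U : Ω → ℝ := fun ω => condCDF ρ (Z ω) (X ω)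
  have hU : Measurable U := hF.comp hV
  have hlaw : μ.map (fun ω => (Z ω, U ω)) = (μ.map Z).prod (volume.restrict (Icc 0 1)) :=
    calc μ.map (fun ω => (Z ω, U ω))
        = (μ.map fun ω => (Z ω, X ω)).map (fun q => (q.1, condCDF ρ q.1 q.2)) :=
          (Measure.map_map (measurable_fst.prodMk hF) hV).symm
      _ = ρ.fst.prod (volume.restrict (Icc 0 1)) := by rw [← hρ, map_prodMk_condCDF ρ hcont]
      _ = (μ.map Z).prod (volume.restrict (Icc 0 1)) := by rw [hρ, Measure.fst_map_prodMk hX]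
  have hUlaw : μ.map U = volume.restrict (Icc 0 1) := by
    rw [← Measure.snd_map_prodMk hZ, hlaw, Measure.snd_prod]
  have hindep : IndepFun Z U μ :=
    (indepFun_iff_map_prod_eq_prod_map_map hZ.aemeasurable hU.aemeasurable).2 <| by
      rw [hlaw, hUlaw]
  refine ⟨(hindep.comp measurable_id measurable_quantileFn_cdf).symm, fun x => ?_⟩
  rw [show (fun ω => quantileFn (cdf ν) (U ω)) = quantileFn (cdf ν) ∘ U from rfl,
    ← Measure.map_map measurable_quantileFn_cdf hU, hUlaw, map_quantileFn_cdf]
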